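/- arXiv:2105.11839 — 4 statements merged into one kernel-verified Lean document; each statement's English description precedes it below -/
import Mathlib

section
/- Let Γ be a finite type of candidate graphs, let pZ : ℝⁿ → ℝ be a measurable prior density (pZ ≥ 0, integrable with ∫ pZ = 1), let q : ℝⁿ → Γ → ℝ be measurable in z with q z G ≥ 0 and ∑_{G} q z G = 1 for every z, let L : Γ → ℝ satisfy L G > 0 for all G, and let f : Γ → ℝ. Define the graph marginal pΓ G := ∫ pZ z · q z G dz and assume ∑_G pΓ G · L G > 0. Then the posterior expectation of f over graphs equals the posterior expectation over z of the conditional ratio: (∑_G pΓ G · L G · f G) / (∑_G pΓ G · L G) = (∫ pZ z · m z · r z dz) / (∫ pZ z · m z dz), where m z := ∑_G q z G · L G and r z := (∑_G q z G · L G · f G) / m z. (Note m z > 0 for every z since L > 0 and ∑_G q z G = 1.) -/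
open MeasureTheory

/-! Both sides have the same numerator and the same denominator. Since `∑_G q z G = 1` and
`L > 0`, `m z > 0`, so `m z * r z = ∑_G q z G * L G * f G`; both integrands are then finite
combinations `pZ z * ∑_G q z G * c G`, and exchanging the integral with the finite sum turns
`∫ pZ z * q z G` into `pΓ G`. -/

theorem Finset.sum_mul_pos_of_sum_pos {ι : Type*} {s : Finset ι} {w L : ι → ℝ}
    (hw : ∀ i ∈ s, 0 ≤ w i) (hw_sum : 0 < ∑ i ∈ s, w i) (hL : ∀ i ∈ s, 0 < L i) :
    0 < ∑ i ∈ s, w i * L i := by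
  obtain ⟨i, hi, hwi⟩ := Finset.exists_ne_zero_of_sum_ne_zero hw_sum.ne'
  exact Finset.sum_pos' (fun j hj => mul_nonneg (hw j hj) (hL j hj).le)
    ⟨i, hi, mul_pos ((hw i hi).lt_of_ne' hwi) (hL i hi)⟩

theorem MeasureTheory.integral_mul_sum_mul {α ι : Type*} [MeasurableSpace α] {μ : Measure α}
    [Fintype ι] {p : α → ℝ} {q : α → ι → ℝ}
    (hint : ∀ i, Integrable (fun z => p z * q z i) μ) (c : ι → ℝ) :
    ∫ z, p z * ∑ i, q z i * c i ∂μ = ∑ i, (∫ z, p z * q z i ∂μ) * c i := by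
  simp_rw [Finset.mul_sum, ← mul_assoc]
  rw [integral_finsetSum _ fun i _ => (hint i).mul_const (c i)]
  simp_rw [integral_mul_const]

theorem dibs_latent_posterior_expectation_marginal_general
    {n : ℕ} {Γ : Type} [Fintype Γ]
    (pZ : EuclideanSpace ℝ (Fin n) → ℝ)
    (hpZ_int : Integrable pZ)
    (q : EuclideanSpace ℝ (Fin n) → Γ → ℝ)
    (hq_meas : ∀ G, Measurable fun z => q z G)
    (hq_nonneg : ∀ z G, 0 ≤ q z G)
    (hq_sum : ∀ z, ∑ G, q z G = 1)
    (L : Γ → ℝ) (hL : ∀ G, 0 < L G)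
    (f : Γ → ℝ)
    (pΓ : Γ → ℝ) (hpΓ : ∀ G, pΓ G = ∫ z, pZ z * q z G)
    (m : EuclideanSpace ℝ (Fin n) → ℝ)
    (hm : ∀ z, m z = ∑ G, q z G * L G)
    (r : EuclideanSpace ℝ (Fin n) → ℝ)
    (hr : ∀ z, r z = (∑ G, q z G * L G * f G) / m z) :
    (∑ G, pΓ G * L G * f G) / (∑ G, pΓ G * L G)
      = (∫ z, pZ z * m z * r z) / (∫ z, pZ z * m z) := by
  have hm_pos : ∀ z, 0 < m z := fun z => hm z ▸ Finset.sum_mul_pos_of_sum_pos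
    (fun G _ => hq_nonneg z G) (by rw [hq_sum]; exact one_pos) fun G _ => hL G
  have hq_le_one : ∀ z G, ‖q z G‖ ≤ 1 := fun z G => by
    rw [Real.norm_of_nonneg (hq_nonneg z G), ← hq_sum z]
    exact Finset.single_le_sum (fun G' _ => hq_nonneg z G') (Finset.mem_univ G)
  have hint : ∀ G, Integrable fun z => pZ z * q z G := fun G =>
    hpZ_int.mul_bdd (hq_meas G).aestronglyMeasurable (ae_of_all _ (hq_le_one · G))
  have hmr : ∀ z, pZ z * m z * r z = pZ z * ∑ G, q z G * (L G * f G) := fun z => by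
    simp_rw [hr, mul_assoc, mul_div_cancel₀ _ (hm_pos z).ne']
  have hnum : ∫ z, pZ z * m z * r z = ∑ G, pΓ G * L G * f G := by
    simp_rw [hmr, integral_mul_sum_mul hint, hpΓ, mul_assoc]
  have hden : ∫ z, pZ z * m z = ∑ G, pΓ G * L G := by
    simp_rw [hm, integral_mul_sum_mul hint, hpΓ]
  rw [hnum, hden]

/-- Proposition 1(a) of DiBS: the posterior expectation of `f` over graphs equals the
posterior expectation over the latent variable `z` of the conditional ratio. -/
theorem dibs_latent_posterior_expectation_marginal
    {n : ℕ} {Γ : Type} [Fintype Γ]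
    (pZ : EuclideanSpace ℝ (Fin n) → ℝ)
    (hpZ_meas : Measurable pZ)
    (hpZ_nonneg : ∀ z, 0 ≤ pZ z)
    (hpZ_int : Integrable pZ)
    (hpZ_one : ∫ z, pZ z = 1)
    (q : EuclideanSpace ℝ (Fin n) → Γ → ℝ)
    (hq_meas : ∀ G, Measurable fun z => q z G)
    (hq_nonneg : ∀ z G, 0 ≤ q z G)
    (hq_sum : ∀ z, ∑ G, q z G = 1)
    (L : Γ → ℝ) (hL : ∀ G, 0 < L G)
    (f : Γ → ℝ)
    (pΓ : Γ → ℝ) (hpΓ : ∀ G, pΓ G = ∫ z, pZ z * q z G)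
    (m : EuclideanSpace ℝ (Fin n) → ℝ)
    (hm : ∀ z, m z = ∑ G, q z G * L G)
    (r : EuclideanSpace ℝ (Fin n) → ℝ)
    (hr : ∀ z, r z = (∑ G, q z G * L G * f G) / m z)
    (hpos : 0 < ∑ G, pΓ G * L G) :
    (∑ G, pΓ G * L G * f G) / (∑ G, pΓ G * L G)
      = (∫ z, pZ z * m z * r z) / (∫ z, pZ z * m z) :=
  dibs_latent_posterior_expectation_marginal_general pZ hpZ_int q hq_meas hq_nonneg hq_sum L hL f pΓ
    hpΓ m hm r hr
end

section
/- Let Γ be a finite type of candidate graphs, let pZ : ℝⁿ → ℝ be a measurable prior density (pZ ≥ 0, integrable with ∫ pZ = 1), let q : ℝⁿ → Γ → ℝ be measurable in z with q z G ≥ 0 and ∑_G q z G = 1 for every z, let π : Γ → ℝᵐ → ℝ be a measurable parameter prior with π G θ > 0 and ∫ π G θ dθ = 1 for each G, let ℓ : Γ → ℝᵐ → ℝ be a measurable likelihood with ℓ G θ > 0, and let f : Γ → ℝᵐ → ℝ be bounded measurable. Set g G θ := π G θ · ℓ G θ, pΓ G := ∫ pZ z · q z G dz, and assume ∫ pZ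 z · g G θ · q z G d(z,θ) is finite for each G and that ∑_G ∫ pΓ G · g G θ dθ > 0. Then (∑_G ∫ pΓ G · g G θ · f G θ dθ) / (∑_G ∫ pΓ G · g G θ dθ) = (∬ pZ z · M z θ · R z θ dθ dz) / (∬ pZ z · M z θ dθ dz), where M z θ := ∑_G q z G · g G θ and R z θ := (∑_G q z G · g G θ · f G θ) / M z θ. -/
/-!
Both sides are ratios of the same shape, so it suffices to match numerators and denominators.
Since `pΓ G = ∫ pZ · q(·, G)`, the product `pΓ G · h G θ` integrates over `θ` to the integral of
`pZ z · q z G · h G θ` over `(z, θ)`; summing over the finitely many `G` and applying Fubini gives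
`∫∫ pZ z · ∑_G q z G · h G θ`. Taking `h = g` yields the denominator `∫∫ pZ · M`; taking
`h = g · f` yields the numerator, because `M · R = ∑_G q · g · f` (both sides vanish where `M` does).
-/

open MeasureTheory

theorem Finset.sum_mul_div_sum_of_nonneg {ι K : Type*} [Field K] [LinearOrder K]
    [IsStrictOrderedRing K] (s : Finset ι) {w : ι → K} (x : ι → K) (hw : ∀ i ∈ s, 0 ≤ w i) :
    (∑ i ∈ s, w i) * ((∑ i ∈ s, w i * x i) / ∑ i ∈ s, w i) = ∑ i ∈ s, w i * x i := by
  by_cases h : ∑ i ∈ s, w i = 0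
  · have hwx : ∑ i ∈ s, w i * x i = 0 := Finset.sum_eq_zero fun i hi => by
      rw [(Finset.sum_eq_zero_iff_of_nonneg hw).1 h i hi, zero_mul]
    rw [hwx, h, zero_mul]
  · exact mul_div_cancel₀ _ h

theorem sum_integral_marginal_mul_eq_integral_integral_mixture {α β ι : Type*}
    [MeasurableSpace α] [MeasurableSpace β] {μ : Measure α} {ν : Measure β} [SFinite μ]
    [SFinite ν] [Fintype ι] (p : α → ℝ) (q : α → ι → ℝ) (h : ι → β → ℝ)
    (hint : ∀ i, Integrable (fun z : α × β => p z.1 * q z.1 i * h i z.2) (μ.prod ν)) :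
    ∑ i, ∫ y, (∫ x, p x * q x i ∂μ) * h i y ∂ν = ∫ x, ∫ y, p x * ∑ i, q x i * h i y ∂ν ∂μ := by
  calc ∑ i, ∫ y, (∫ x, p x * q x i ∂μ) * h i y ∂ν
      = ∑ i, ∫ z, p z.1 * q z.1 i * h i z.2 ∂μ.prod ν := by
        simp only [integral_const_mul, ← integral_prod_mul]
    _ = ∫ z, ∑ i, p z.1 * q z.1 i * h i z.2 ∂μ.prod ν :=
        (integral_finsetSum _ fun i _ => hint i).symm
    _ = ∫ x, ∫ y, ∑ i, p x * q x i * h i y ∂ν ∂μ :=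
        integral_prod _ (integrable_finsetSum _ fun i _ => hint i)
    _ = ∫ x, ∫ y, p x * ∑ i, q x i * h i y ∂ν ∂μ := by
        simp only [Finset.mul_sum, mul_assoc]

theorem dibs_latent_posterior_expectation_joint_general
    {n m : ℕ} {Γ : Type} [Fintype Γ]
    (pZ : EuclideanSpace ℝ (Fin n) → ℝ)
    (q : EuclideanSpace ℝ (Fin n) → Γ → ℝ)
    (hq_nonneg : ∀ z G, 0 ≤ q z G)
    (prior : Γ → EuclideanSpace ℝ (Fin m) → ℝ)
    (hprior_pos : ∀ G θ, 0 < prior G θ)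
    (lik : Γ → EuclideanSpace ℝ (Fin m) → ℝ)
    (hlik_pos : ∀ G θ, 0 < lik G θ)
    (f : Γ → EuclideanSpace ℝ (Fin m) → ℝ)
    (hf_meas : ∀ G, Measurable (f G))
    (hf_bdd : ∃ C, ∀ G θ, |f G θ| ≤ C)
    (g : Γ → EuclideanSpace ℝ (Fin m) → ℝ)
    (hg : ∀ G θ, g G θ = prior G θ * lik G θ)
    (pΓ : Γ → ℝ) (hpΓ : ∀ G, pΓ G = ∫ z, pZ z * q z G)
    (hint : ∀ G, Integrable
      (fun p : EuclideanSpace ℝ (Fin n) × EuclideanSpace ℝ (Fin m) =>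
        pZ p.1 * g G p.2 * q p.1 G))
    (M : EuclideanSpace ℝ (Fin n) → EuclideanSpace ℝ (Fin m) → ℝ)
    (hM : ∀ z θ, M z θ = ∑ G, q z G * g G θ)
    (R : EuclideanSpace ℝ (Fin n) → EuclideanSpace ℝ (Fin m) → ℝ)
    (hR : ∀ z θ, R z θ = (∑ G, q z G * g G θ * f G θ) / M z θ) :
    (∑ G, ∫ θ, pΓ G * g G θ * f G θ) / (∑ G, ∫ θ, pΓ G * g G θ)
      = (∫ z, ∫ θ, pZ z * M z θ * R z θ) / (∫ z, ∫ θ, pZ z * M z θ) := by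
  obtain ⟨C, hC⟩ := hf_bdd
  have hint_g : ∀ G, Integrable (fun p : EuclideanSpace ℝ (Fin n) × EuclideanSpace ℝ (Fin m) =>
      pZ p.1 * q p.1 G * g G p.2) := fun G =>
    (hint G).congr (.of_forall fun p => by ring)
  have hint_f : ∀ G, Integrable (fun p : EuclideanSpace ℝ (Fin n) × EuclideanSpace ℝ (Fin m) =>
      pZ p.1 * q p.1 G * (g G p.2 * f G p.2)) := fun G =>
    ((hint_g G).bdd_mul ((hf_meas G).comp measurable_snd).aestronglyMeasurable
      (.of_forall fun p => hC G p.2)).congr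
      (.of_forall fun p => by simp only [Function.comp_apply]; ring)
  have hMR : ∀ z θ, M z θ * R z θ = ∑ G, q z G * g G θ * f G θ := fun z θ => by
    rw [hR, hM]
    refine Finset.sum_mul_div_sum_of_nonneg _ _ fun G _ => mul_nonneg (hq_nonneg z G) ?_
    rw [hg]
    exact (mul_pos (hprior_pos G θ) (hlik_pos G θ)).le
  simp only [hpΓ, mul_assoc, hMR]
  simp only [hM]
  rw [sum_integral_marginal_mul_eq_integral_integral_mixture _ _ _ hint_g,
    sum_integral_marginal_mul_eq_integral_integral_mixture _ _ _ hint_f]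

/-- Proposition 1(b) of DiBS: the joint posterior expectation of `f` over graphs and
parameters equals the posterior expectation over the latent variables `(z, θ)` of the
conditional ratio. -/
theorem dibs_latent_posterior_expectation_joint
    {n m : ℕ} {Γ : Type} [Fintype Γ]
    (pZ : EuclideanSpace ℝ (Fin n) → ℝ)
    (hpZ_meas : Measurable pZ)
    (hpZ_nonneg : ∀ z, 0 ≤ pZ z)
    (hpZ_int : Integrable pZ)
    (hpZ_one : ∫ z, pZ z = 1)
    (q : EuclideanSpace ℝ (Fin n) → Γ → ℝ)
    (hq_meas : ∀ G, Measurable fun z => q z G)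
    (hq_nonneg : ∀ z G, 0 ≤ q z G)
    (hq_sum : ∀ z, ∑ G, q z G = 1)
    (prior : Γ → EuclideanSpace ℝ (Fin m) → ℝ)
    (hprior_meas : ∀ G, Measurable (prior G))
    (hprior_pos : ∀ G θ, 0 < prior G θ)
    (hprior_one : ∀ G, ∫ θ, prior G θ = 1)
    (lik : Γ → EuclideanSpace ℝ (Fin m) → ℝ)
    (hlik_meas : ∀ G, Measurable (lik G))
    (hlik_pos : ∀ G θ, 0 < lik G θ)
    (f : Γ → EuclideanSpace ℝ (Fin m) → ℝ)
    (hf_meas : ∀ G, Measurable (f G))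
    (hf_bdd : ∃ C, ∀ G θ, |f G θ| ≤ C)
    (g : Γ → EuclideanSpace ℝ (Fin m) → ℝ)
    (hg : ∀ G θ, g G θ = prior G θ * lik G θ)
    (pΓ : Γ → ℝ) (hpΓ : ∀ G, pΓ G = ∫ z, pZ z * q z G)
    (hint : ∀ G, Integrable
      (fun p : EuclideanSpace ℝ (Fin n) × EuclideanSpace ℝ (Fin m) =>
        pZ p.1 * g G p.2 * q p.1 G))
    (M : EuclideanSpace ℝ (Fin n) → EuclideanSpace ℝ (Fin m) → ℝ)
    (hM : ∀ z θ, M z θ = ∑ G, q z G * g G θ)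
    (R : EuclideanSpace ℝ (Fin n) → EuclideanSpace ℝ (Fin m) → ℝ)
    (hR : ∀ z θ, R z θ = (∑ G, q z G * g G θ * f G θ) / M z θ)
    (hpos : 0 < ∑ G, ∫ θ, pΓ G * g G θ) :
    (∑ G, ∫ θ, pΓ G * g G θ * f G θ) / (∑ G, ∫ θ, pΓ G * g G θ)
      = (∫ z, ∫ θ, pZ z * M z θ * R z θ) / (∫ z, ∫ θ, pZ z * M z θ) :=
  dibs_latent_posterior_expectation_joint_general pZ q hq_nonneg prior hprior_pos lik hlik_pos f
    hf_meas hf_bdd g hg pΓ hpΓ hint M hM R hR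
end

section
/- Fix d, k ∈ ℕ and Z = (U, V) with U, V : Fin d → EuclideanSpace ℝ (Fin k) such that ⟪u_i, v_j⟫ ≠ 0 for all i ≠ j. Then for every zero-diagonal binary matrix G : Fin d → Fin d → {0,1}, the probability p_α(G | Z) converges as α → ∞ to 1 if G = G_∞(Z) and to 0 otherwise; that is, lim_{α→∞} p_α(G | Z) = 𝟙[G = G_∞(Z)]. -/
open Filter

/-- Sigmoid with inverse temperature `α`: `σ_α(x) = 1 / (1 + exp (−α x))`. -/
noncomputable def sigmoidAlpha (α x : ℝ) : ℝ := (1 + Real.exp (-(α * x)))⁻¹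

/-- The DiBS latent graph model: the probability of the zero-diagonal binary adjacency
matrix `G` given latent node embeddings `U, V`, at inverse temperature `α`:
`p_α(G | Z) = ∏_{i ≠ j} σ_α(⟪u_i, v_j⟫)^{G i j} (1 − σ_α(⟪u_i, v_j⟫))^{1 − G i j}`. -/
noncomputable def pAlpha {d k : ℕ} (α : ℝ) (U V : Fin d → EuclideanSpace ℝ (Fin k))
    (G : Fin d → Fin d → Bool) : ℝ :=
  ∏ i, ∏ j,
    if i = j then 1
    else
      sigmoidAlpha α (inner ℝ (U i) (V j)) ^ (G i j).toNat *
        (1 - sigmoidAlpha α (inner ℝ (U i) (V j))) ^ (1 - (G i j).toNat)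

/-- The limiting graph `G_∞(Z)`: edge `(i, j)` present iff `i ≠ j` and `⟪u_i, v_j⟫ > 0`. -/
noncomputable def gInfty {d k : ℕ} (U V : Fin d → EuclideanSpace ℝ (Fin k)) :
    Fin d → Fin d → Bool :=
  fun i j => decide (i ≠ j ∧ 0 < (inner ℝ (U i) (V j) : ℝ))

/-!
Each off-diagonal factor of `p_α(G | Z)` is a Bernoulli likelihood `p^b (1 - p)^(1 - b)`, a
continuous function of the edge probability `p = σ_α(⟪u_i, v_j⟫)`. Since `⟪u_i, v_j⟫ ≠ 0`, this
probability tends to `1` or `0` according to the sign of the inner product, i.e. to the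
indicator of the edge of `G_∞(Z)`, so the factor tends to `𝟙[G i j = G_∞(Z) i j]`. The
product of these finitely many indicators is `𝟙[G = G_∞(Z)]`, the diagonal being zero on both
sides.
-/

open Topology

lemma sigmoidAlpha_tendsto_one {x : ℝ} (hx : 0 < x) :
    Tendsto (fun α => sigmoidAlpha α x) atTop (𝓝 1) := by
  have hexp : Tendsto (fun α => Real.exp (-(α * x))) atTop (𝓝 0) :=
    Real.tendsto_exp_atBot.comp <| tendsto_neg_atTop_atBot.comp <| tendsto_id.atTop_mul_const hx
  simpa [sigmoidAlpha] using (tendsto_const_nhds.add hexp).inv₀ (by norm_num : (1 : ℝ) + 0 ≠ 0)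

lemma sigmoidAlpha_tendsto_zero {x : ℝ} (hx : x < 0) :
    Tendsto (fun α => sigmoidAlpha α x) atTop (𝓝 0) := by
  have hexp : Tendsto (fun α => Real.exp (-(α * x))) atTop atTop := by
    refine Real.tendsto_exp_atTop.comp ?_
    simpa only [mul_neg, id] using tendsto_id.atTop_mul_const (neg_pos.mpr hx)
  exact (tendsto_atTop_add_const_left _ 1 hexp).inv_tendsto_atTop

lemma sigmoidAlpha_tendsto_indicator {x : ℝ} (hx : x ≠ 0) :
    Tendsto (fun α => sigmoidAlpha α x) atTop (𝓝 (if 0 < x then 1 else 0)) := by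
  rcases hx.lt_or_gt with hneg | hpos
  · simpa [hneg.not_gt] using sigmoidAlpha_tendsto_zero hneg
  · simpa [hpos] using sigmoidAlpha_tendsto_one hpos

lemma tendsto_bernoulli_likelihood {ι : Type*} {l : Filter ι} {p : ι → ℝ} {c : Bool}
    (hp : Tendsto p l (𝓝 (if c then 1 else 0))) (b : Bool) :
    Tendsto (fun a => p a ^ b.toNat * (1 - p a) ^ (1 - b.toNat)) l
      (𝓝 (if b = c then 1 else 0)) := by
  have hcont : Continuous fun q : ℝ => q ^ b.toNat * (1 - q) ^ (1 - b.toNat) := by fun_prop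
  have hlim : (if b = c then (1 : ℝ) else 0) =
      (if c then 1 else 0) ^ b.toNat * (1 - if c then 1 else 0) ^ (1 - b.toNat) := by
    cases b <;> cases c <;> norm_num
  rw [hlim]
  exact (hcont.tendsto _).comp hp

lemma gInfty_of_ne {d k : ℕ} (U V : Fin d → EuclideanSpace ℝ (Fin k)) {i j : Fin d}
    (hij : i ≠ j) : gInfty U V i j = decide (0 < (inner ℝ (U i) (V j) : ℝ)) := by
  simp [gInfty, hij]

lemma gInfty_self {d k : ℕ} (U V : Fin d → EuclideanSpace ℝ (Fin k)) (i : Fin d) :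
    gInfty U V i i = false := by
  simp [gInfty]

/-- Equation (A.26) of DiBS: as `α → ∞`, `p_α(G | Z)` converges to `𝟙[G = G_∞(Z)]`,
provided no inner product `⟪u_i, v_j⟫` (for `i ≠ j`) vanishes. -/
theorem pAlpha_tendsto_indicator {d k : ℕ}
    (U V : Fin d → EuclideanSpace ℝ (Fin k))
    (hne : ∀ i j : Fin d, i ≠ j → (inner ℝ (U i) (V j) : ℝ) ≠ 0)
    (G : Fin d → Fin d → Bool) (hG : ∀ i, G i i = false) :
    Tendsto (fun α : ℝ => pAlpha α U V G) atTop
      (nhds (if G = gInfty U V then (1 : ℝ) else 0)) := by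
  have hfactor : ∀ i j, Tendsto (fun α => if i = j then (1 : ℝ) else
      sigmoidAlpha α (inner ℝ (U i) (V j)) ^ (G i j).toNat *
        (1 - sigmoidAlpha α (inner ℝ (U i) (V j))) ^ (1 - (G i j).toNat))
      atTop (𝓝 (if G i j = gInfty U V i j then 1 else 0)) := by
    intro i j
    by_cases hij : i = j
    · subst hij
      simp [hG, gInfty_self]
    · simp only [hij, if_false, gInfty_of_ne U V hij]
      refine tendsto_bernoulli_likelihood ?_ (G i j)
      simpa using sigmoidAlpha_tendsto_indicator (hne i j hij)
  have hprod := tendsto_finsetProd Finset.univ fun i _ =>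
    tendsto_finsetProd Finset.univ fun j _ => hfactor i j
  simpa only [pAlpha, Fintype.prod_boole, ← funext_iff] using hprod
end

section
/- Let μ be the standard Gumbel probability measure on ℝ, i.e., the measure with density x ↦ exp(−x − exp(−x)) with respect to Lebesgue measure. Then for every q ∈ (0, 1), the product measure μ × μ assigns probability exactly q to the event {(x, y) ∈ ℝ × ℝ : x + log q > y + log(1 − q)}. -/
open MeasureTheory

/-!
The substitution `u = exp (-x)` turns `exp (-x - a * exp (-x)) dx` into `exp (-a * u) du` on
`(0, ∞)`, so this density has total mass `a⁻¹` and the Gumbel distribution function is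
`exp (-exp (-t))`. Conditioning on the first coordinate,
`P(G₀ < G₁ + c) = ∫ exp (-exp (-c) * exp (-x)) dμ(x) = ∫ exp (-x - (1 + exp (-c)) * exp (-x)) dx`,
which is the logistic function `(1 + exp (-c))⁻¹`; at `c = log q - log (1 - q)` it equals `q`.
-/

open Real Set

lemma setLIntegral_exp_neg_sub_mul_exp_neg (a : ℝ) {s : Set ℝ} (hs : MeasurableSet s) :
    ∫⁻ x in s, ENNReal.ofReal (exp (-x - a * exp (-x)))
      = ∫⁻ u in (fun x => exp (-x)) '' s, ENNReal.ofReal (exp (-a * u)) := by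
  have hderiv (x : ℝ) : HasDerivWithinAt (fun x => exp (-x)) (-exp (-x)) s x := by
    simpa using ((hasDerivAt_neg x).exp).hasDerivWithinAt
  have hinj : InjOn (fun x => exp (-x)) s := fun x _ y _ h => neg_injective (exp_injective h)
  rw [lintegral_image_eq_lintegral_abs_deriv_mul hs (fun x _ => hderiv x) hinj]
  refine setLIntegral_congr_fun hs fun x _ => ?_
  rw [abs_neg, abs_of_pos (exp_pos _), ← ENNReal.ofReal_mul (exp_nonneg _), ← exp_add]
  ring_nf

lemma setLIntegral_Ioi_exp_neg_mul {a : ℝ} (ha : 0 < a) (b : ℝ) :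
    ∫⁻ u in Ioi b, ENNReal.ofReal (exp (-a * u)) = ENNReal.ofReal (exp (-a * b) / a) := by
  rw [← ofReal_integral_eq_lintegral_ofReal (integrableOn_exp_mul_Ioi (neg_lt_zero.2 ha) b)
    (.of_forall fun _ => exp_nonneg _), integral_exp_mul_Ioi (neg_lt_zero.2 ha), neg_div_neg_eq]

lemma setLIntegral_Iio_exp_neg_sub_mul_exp_neg {a : ℝ} (ha : 0 < a) (t : ℝ) :
    ∫⁻ x in Iio t, ENNReal.ofReal (exp (-x - a * exp (-x)))
      = ENNReal.ofReal (exp (-a * exp (-t)) / a) := by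
  have himage : (fun x => exp (-x)) '' Iio t = Ioi (exp (-t)) := by
    rw [show (fun x => exp (-x)) = exp ∘ Neg.neg from rfl, image_comp, image_neg_Iio,
      image_exp_Ioi]
  rw [setLIntegral_exp_neg_sub_mul_exp_neg a measurableSet_Iio, himage,
    setLIntegral_Ioi_exp_neg_mul ha]

lemma lintegral_exp_neg_sub_mul_exp_neg {a : ℝ} (ha : 0 < a) :
    ∫⁻ x, ENNReal.ofReal (exp (-x - a * exp (-x))) = ENNReal.ofReal a⁻¹ := by
  have himage : (fun x => exp (-x)) '' univ = Ioi 0 := by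
    rw [show (fun x => exp (-x)) = exp ∘ Neg.neg from rfl, image_comp,
      image_univ_of_surjective neg_surjective, image_univ, range_exp]
  rw [← setLIntegral_univ, setLIntegral_exp_neg_sub_mul_exp_neg a MeasurableSet.univ, himage,
    setLIntegral_Ioi_exp_neg_mul ha, mul_zero, exp_zero, one_div]

noncomputable def gumbelMeasure : Measure ℝ :=
  volume.withDensity fun x => ENNReal.ofReal (exp (-x - exp (-x)))

instance : IsProbabilityMeasure gumbelMeasure where
  measure_univ := by
    rw [gumbelMeasure, withDensity_apply _ MeasurableSet.univ, setLIntegral_univ]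
    simpa using lintegral_exp_neg_sub_mul_exp_neg one_pos

lemma gumbelMeasure_Iio (t : ℝ) : gumbelMeasure (Iio t) = ENNReal.ofReal (exp (-exp (-t))) := by
  rw [gumbelMeasure, withDensity_apply _ measurableSet_Iio]
  simpa using setLIntegral_Iio_exp_neg_sub_mul_exp_neg one_pos t

lemma lintegral_exp_neg_mul_exp_neg_gumbelMeasure {b : ℝ} (hb : 0 ≤ b) :
    ∫⁻ x, ENNReal.ofReal (exp (-b * exp (-x))) ∂gumbelMeasure = ENNReal.ofReal (1 + b)⁻¹ := by
  rw [gumbelMeasure, lintegral_withDensity_eq_lintegral_mul _ (by fun_prop) (by fun_prop),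
    ← lintegral_exp_neg_sub_mul_exp_neg (by positivity : 0 < 1 + b)]
  refine lintegral_congr fun x => ?_
  rw [Pi.mul_apply, ← ENNReal.ofReal_mul (exp_nonneg _), ← exp_add]
  ring_nf

lemma gumbelMeasure_prod_lt_add (c : ℝ) :
    (gumbelMeasure.prod gumbelMeasure) {p : ℝ × ℝ | p.2 < p.1 + c}
      = ENNReal.ofReal (1 + exp (-c))⁻¹ := by
  rw [Measure.prod_apply (measurableSet_lt (by fun_prop) (by fun_prop))]
  calc ∫⁻ x, gumbelMeasure (Prod.mk x ⁻¹' {p : ℝ × ℝ | p.2 < p.1 + c}) ∂gumbelMeasure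
      = ∫⁻ x, ENNReal.ofReal (exp (-exp (-c) * exp (-x))) ∂gumbelMeasure := by
        refine lintegral_congr fun x => ?_
        rw [show Prod.mk x ⁻¹' {p : ℝ × ℝ | p.2 < p.1 + c} = Iio (x + c) from rfl,
          gumbelMeasure_Iio, neg_add, exp_add, neg_mul, mul_comm]
    _ = ENNReal.ofReal (1 + exp (-c))⁻¹ :=
        lintegral_exp_neg_mul_exp_neg_gumbelMeasure (exp_nonneg _)

/-- The Gumbel-max trick, equation (B.1) of DiBS: for independent standard Gumbel
random variables `x, y`, the event `x + log q > y + log (1 − q)` has probability `q`,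
for every `q ∈ (0, 1)`. -/
theorem gumbel_max_trick
    (μ : Measure ℝ)
    (hμ : μ = volume.withDensity fun x => ENNReal.ofReal (Real.exp (-x - Real.exp (-x))))
    (q : ℝ) (hq : q ∈ Set.Ioo (0 : ℝ) 1) :
    (μ.prod μ) {p : ℝ × ℝ | p.2 + Real.log (1 - q) < p.1 + Real.log q}
      = ENNReal.ofReal q := by
  obtain ⟨hq0, hq1⟩ := hq
  have hlogit : (1 + exp (-(log q - log (1 - q))))⁻¹ = q := by
    rw [neg_sub, exp_sub, exp_log (sub_pos.2 hq1), exp_log hq0]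
    field_simp
    ring
  have hevent : {p : ℝ × ℝ | p.2 + log (1 - q) < p.1 + log q}
      = {p : ℝ × ℝ | p.2 < p.1 + (log q - log (1 - q))} := by
    ext p
    simp only [mem_ofPred_eq]
    constructor <;> intro h <;> linarith
  rw [hμ, hevent, ← gumbelMeasure, gumbelMeasure_prod_lt_add, hlogit]
end
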